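/- arXiv:1008.3763 — 4 statements merged into one kernel-verified Lean document; each statement's English description precedes it below -/
import Mathlib

section
/- Let R be a commutative ring of prime characteristic p and let c ∈ R. Define two left R[x,f]-module structures on R: one with x·r = r^p and one (denoted (R,α_c)) with x·r = c·r^p. Then (R,α) ≅ (R,α_c) as left R[x,f]-modules if and only if c is a unit of R possessing a (p−1)-th root in R. -/
/-!
An `R`-linear automorphism of `R` is multiplication by the unit `u = e 1`, and it intertwines
`r ↦ rᵖ` with `r ↦ c rᵖ` exactly when `u = c uᵖ`, i.e. `c = (u⁻¹) ^ (p - 1)`. Conversely a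
root `d` of `c` is a unit because `c` is, and multiplication by `d⁻¹` is an isomorphism.
-/

namespace LinearEquiv

variable {R : Type*} [CommSemiring R]

theorem apply_eq_mul_apply_one (e : R ≃ₗ[R] R) (r : R) : e r = r * e 1 := by
  simpa using e.map_smul r 1

theorem isUnit_apply_one (e : R ≃ₗ[R] R) : IsUnit (e 1) :=
  .of_mul_eq_one (e.symm 1) <| by
    rw [mul_comm, ← apply_eq_mul_apply_one, apply_symm_apply]

theorem exists_map_pow_eq_mul_pow_iff (c : R) (n : ℕ) :
    (∃ e : R ≃ₗ[R] R, ∀ r, e (r ^ n) = c * e r ^ n) ↔ ∃ u : Rˣ, c * (u : R) ^ n = u := by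
  constructor
  · rintro ⟨e, he⟩
    exact ⟨e.isUnit_apply_one.unit, by simpa using (he 1).symm⟩
  · rintro ⟨u, hu⟩
    refine ⟨smulOfUnit u, fun r => ?_⟩
    change (u : R) * r ^ n = c * ((u : R) * r) ^ n
    rw [mul_pow, ← mul_assoc, hu, mul_comm]

end LinearEquiv

section CommMonoid

variable {M : Type*} [CommMonoid M]

theorem Units.mul_pow_succ_eq_self_iff (c : M) (u : Mˣ) (n : ℕ) :
    c * (u : M) ^ (n + 1) = u ↔ ((u⁻¹ : Mˣ) : M) ^ n = c := by
  rw [pow_succ, ← mul_assoc, u.isUnit.mul_eq_right, ← Units.val_pow_eq_pow_val,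
    Units.mul_eq_one_iff_eq_inv, ← inv_pow, Units.val_pow_eq_pow_val, eq_comm]

theorem exists_units_pow_eq_iff (c : M) (n : ℕ) :
    (∃ d : Mˣ, (d : M) ^ n = c) ↔ IsUnit c ∧ ∃ d, d ^ n = c := by
  refine ⟨fun ⟨d, hd⟩ => ⟨hd ▸ (d ^ n).isUnit, d, hd⟩, ?_⟩
  rintro ⟨hc, d, rfl⟩
  obtain rfl | hn := eq_or_ne n 0
  · exact ⟨1, by simp⟩
  · exact ⟨((isUnit_pow_iff hn).mp hc).unit, rfl⟩

end CommMonoid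

theorem skew_structures_iso_iff_unit_with_root_general (R : Type*) [CommRing R] (p : ℕ)
    [Fact p.Prime] (c : R) :
    (∃ e : R ≃ₗ[R] R, ∀ r : R, e (r ^ p) = c * (e r) ^ p) ↔
      (IsUnit c ∧ ∃ d : R, d ^ (p - 1) = c) := by
  obtain ⟨n, rfl⟩ : ∃ n, p = n + 1 := Nat.exists_eq_add_one.mpr (Fact.out : p.Prime).pos
  rw [LinearEquiv.exists_map_pow_eq_mul_pow_iff, Nat.add_sub_cancel, ← exists_units_pow_eq_iff,
    ← (Equiv.inv Rˣ).exists_congr_right]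
  simp only [Units.mul_pow_succ_eq_self_iff, Equiv.inv_apply, inv_inv]

/-- Let `R` be a commutative ring of prime characteristic `p` and `c ∈ R`.
Consider the two left `R[x,f]`-module structures on `R`: `(R, α)` with `x·r = rᵖ`, and
`(R, α_c)` with `x·r = c·rᵖ`.  An isomorphism of left `R[x,f]`-modules between them
is an `R`-linear bijection `e : R → R` with `e (rᵖ) = c * (e r)ᵖ` for all `r`.
Such an isomorphism exists iff `c` is a unit of `R` possessing a `(p-1)`-th root in `R`. -/
theorem skew_structures_iso_iff_unit_with_root (R : Type*) [CommRing R] (p : ℕ)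
    [Fact p.Prime] [CharP R p] (c : R) :
    (∃ e : R ≃ₗ[R] R, ∀ r : R, e (r ^ p) = c * (e r) ^ p) ↔
      (IsUnit c ∧ ∃ d : R, d ^ (p - 1) = c) :=
  skew_structures_iso_iff_unit_with_root_general R p c
end

section
/- Let R be a commutative ring of prime characteristic p and let M be a right R[x,f]-module. Suppose there exists s ∈ R with M·s ⊆ M·x. Then M·s² ⊆ M·x^k for every k ∈ ℕ, k ≥ 1. -/
/-!
Semilinearity, `s • ξ m = ξ (s ^ p • m)`, moves a factor `s` inside `ξ` at the price of raising
it to the `p`-th power. Hence `s² M = s (s M) ⊆ s ξ(M) ⊆ ξ(s^p M)`, so `s^p M ⊆ ξ^k(M)` gives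
`s² M ⊆ ξ^(k+1)(M)`. As `p ≥ 2`, `s^p M ⊆ s² M`, and induction on `k` gives `s^p M ⊆ ξ^k(M)`
for every `k`.
-/

section FrobeniusSemilinear

variable {R M : Type*} [Semiring R] [AddCommMonoid M] [Module R M] {p : ℕ} {ξ : M →+ M}
  {s : R}

theorem sq_smul_mem_range_iterate_succ (hξ : ∀ (r : R) (m : M), ξ (r ^ p • m) = r • ξ m)
    (hs : ∀ m : M, s • m ∈ Set.range ξ) {k : ℕ} (hk : ∀ m : M, s ^ p • m ∈ Set.range (⇑ξ)^[k])
    (m : M) : s ^ 2 • m ∈ Set.range (⇑ξ)^[k + 1] := by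
  obtain ⟨m₁, hm₁⟩ := hs m
  obtain ⟨n, hn⟩ := hk m₁
  refine ⟨n, ?_⟩
  calc (⇑ξ)^[k + 1] n = ξ (s ^ p • m₁) := by rw [Function.iterate_succ_apply', hn]
    _ = s • s • m := by rw [hξ, hm₁]
    _ = s ^ 2 • m := by rw [pow_two, mul_smul]

theorem pow_smul_mem_range_iterate (hp : 2 ≤ p)
    (hξ : ∀ (r : R) (m : M), ξ (r ^ p • m) = r • ξ m) (hs : ∀ m : M, s • m ∈ Set.range ξ)
    (k : ℕ) (m : M) : s ^ p • m ∈ Set.range (⇑ξ)^[k] := by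
  induction k generalizing m with
  | zero => exact ⟨_, rfl⟩
  | succ k ih =>
    have hsplit : s ^ p • m = s ^ 2 • s ^ (p - 2) • m := by
      rw [smul_smul, ← pow_add, Nat.add_sub_cancel' hp]
    rw [hsplit]
    exact sq_smul_mem_range_iterate_succ hξ hs ih _

end FrobeniusSemilinear

theorem Ms_sq_subset_Mxk_general (R M : Type*) [CommRing R] (p : ℕ) [Fact p.Prime]
    [AddCommGroup M] [Module R M] (ξ : M →+ M)
    (hξ : ∀ (r : R) (m : M), ξ (r ^ p • m) = r • ξ m)
    (s : R) (h : ∀ m : M, ∃ m' : M, s • m = ξ m') :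
    ∀ k : ℕ, 1 ≤ k → ∀ m : M, ∃ m' : M, (s ^ 2) • m = (⇑ξ)^[k] m' := by
  intro k hk m
  have hs : ∀ m : M, s • m ∈ Set.range ξ := fun m => (h m).imp fun _ => Eq.symm
  obtain ⟨j, rfl⟩ := Nat.exists_eq_add_of_le' hk
  obtain ⟨m', hm'⟩ := sq_smul_mem_range_iterate_succ hξ hs
    (pow_smul_mem_range_iterate (Fact.out : p.Prime).two_le hξ hs j) m
  exact ⟨m', hm'.symm⟩

/-- Let `R` be a commutative ring of prime characteristic `p` and `M` a right
`R[x,f]`-module, encoded by its underlying `R`-module together with the additive map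
`ξ : M → M`, `ξ m = m·x`, satisfying `ξ (rᵖ • m) = r • ξ m` (i.e. `(m·rᵖ)·x = (m·x)·r`).
If there is `s ∈ R` with `M·s ⊆ M·x`, then `M·s² ⊆ M·xᵏ` for every `k ≥ 1`. -/
theorem Ms_sq_subset_Mxk (R M : Type*) [CommRing R] (p : ℕ) [Fact p.Prime] [CharP R p]
    [AddCommGroup M] [Module R M] (ξ : M →+ M)
    (hξ : ∀ (r : R) (m : M), ξ (r ^ p • m) = r • ξ m)
    (s : R) (h : ∀ m : M, ∃ m' : M, s • m = ξ m') :
    ∀ k : ℕ, 1 ≤ k → ∀ m : M, ∃ m' : M, (s ^ 2) • m = (⇑ξ)^[k] m' :=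
  Ms_sq_subset_Mxk_general R M p ξ hξ s h
end

section
/- Let R be a commutative ring of prime characteristic p, M a right R[x,f]-module, and S a multiplicatively closed subset of R. Then the localization S⁻¹M carries a natural right (S⁻¹R)[x,f]-module structure in which (m/s)·x = (m s^{p−1} x)/s, and under this structure S⁻¹(M·x^k) = (S⁻¹M)·x^k for all k ∈ ℕ. -/
/-!
The action `ξ` of `x` on `M` is additive and satisfies `ξ (rᵖ • m) = r • ξ m`, so on fractions
`m / s = (sᵖ⁻¹ • m) / sᵖ` it must act by `m / s ↦ ξ (sᵖ⁻¹ • m) / s`. This is independent of the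
representative because enlarging `s` to `t * s` multiplies `sᵖ⁻¹ • m` by `tᵖ`, which `ξ` turns
into `t`. Iterating, `Ξᵏ (m / s) = ξᵏ (s^(pᵏ - 1) • m) / s`, so every `Ξᵏ (m / s)` has the form
`ξᵏ (m') / s`; conversely `ξᵏ m / s = Ξᵏ (m / s^(pᵏ))`.
-/

open LocalizedModule

theorem iterate_pow_pow_smul {R M : Type*} [Monoid R] [SMul R M] {p : ℕ}
    {f : M → M} (hf : ∀ (r : R) (m : M), f (r ^ p • m) = r • f m) (k : ℕ) (r : R) (m : M) :
    f^[k] (r ^ p ^ k • m) = r • f^[k] m := by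
  induction k generalizing r with
  | zero => simp
  | succ k ih =>
    rw [Function.iterate_succ_apply', Function.iterate_succ_apply', pow_succ', pow_mul, ih, hf]

theorem pred_mul_pow_add_pow_pred {p : ℕ} (hp : 0 < p) (k : ℕ) :
    (p - 1) * p ^ k + (p ^ k - 1) = p ^ (k + 1) - 1 := by
  have : 0 < p ^ k := pow_pos hp k
  have : p ^ k ≤ p ^ k * p := Nat.le_mul_of_pos_right _ hp
  rw [pow_succ, Nat.sub_one_mul, mul_comm]
  omega

namespace LocalizedModule

variable {R M : Type*} [CommSemiring R] [AddCommMonoid M] [Module R M] {S : Submonoid R}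
  {p : ℕ} {ξ : M →+ M}

theorem mk_map_pow_pred_smul_mul (hp : 0 < p) (hξ : ∀ (r : R) (m : M), ξ (r ^ p • m) = r • ξ m)
    (t s : S) (m : M) :
    mk (ξ (((t * s : S) : R) ^ (p - 1) • t • m)) (t * s) = mk (ξ ((s : R) ^ (p - 1) • m)) s := by
  have : ((t * s : S) : R) ^ (p - 1) • t • m = (t : R) ^ p • (s : R) ^ (p - 1) • m := by
    rw [Submonoid.smul_def, smul_smul, smul_smul, Submonoid.coe_mul, mul_pow, mul_right_comm,
      ← pow_succ, Nat.sub_add_cancel hp]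
  rw [this, hξ, ← Submonoid.smul_def, mk_cancel_common_left]

theorem mk_map_pow_pred_smul_congr (hp : 0 < p)
    (hξ : ∀ (r : R) (m : M), ξ (r ^ p • m) = r • ξ m) (a b : M × S) (hab : a ≈ b) :
    mk (ξ ((a.2 : R) ^ (p - 1) • a.1)) a.2 = mk (ξ ((b.2 : R) ^ (p - 1) • b.1)) b.2 := by
  obtain ⟨m, s⟩ := a
  obtain ⟨n, t⟩ := b
  obtain ⟨u, hu⟩ : ∃ u : S, u • t • m = u • s • n := hab
  rw [← mk_map_pow_pred_smul_mul hp hξ (u * t), ← mk_map_pow_pred_smul_mul hp hξ (u * s) t,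
    mul_smul, mul_smul, hu, mul_right_comm]

theorem mk_map_pow_pred_smul_add (hp : 0 < p) (hξ : ∀ (r : R) (m : M), ξ (r ^ p • m) = r • ξ m)
    (m n : M) (s t : S) :
    mk (ξ (((s * t : S) : R) ^ (p - 1) • (t • m + s • n))) (s * t)
      = mk (ξ ((s : R) ^ (p - 1) • m)) s + mk (ξ ((t : R) ^ (p - 1) • n)) t := by
  have mk_add : ∀ (x y : M) (u : S), mk (x + y) u = mk x u + mk y u :=
    fun _ _ _ ↦ OreLocalization.add_oreDiv.symm
  rw [smul_add, map_add, mk_add, ← mk_map_pow_pred_smul_mul hp hξ t s,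
    ← mk_map_pow_pred_smul_mul hp hξ s t, mul_comm t s]

/-- The right action of `x` on `S⁻¹M`. -/
def skewMap (hp : 0 < p) (hξ : ∀ (r : R) (m : M), ξ (r ^ p • m) = r • ξ m) :
    LocalizedModule S M →+ LocalizedModule S M where
  toFun x := x.liftOn (fun a ↦ mk (ξ ((a.2 : R) ^ (p - 1) • a.1)) a.2)
    (mk_map_pow_pred_smul_congr hp hξ)
  map_zero' := by rw [← zero_mk 1, liftOn_mk, smul_zero, map_zero]
  map_add' x y := by
    induction x, y using induction_on₂ with
    | h m n s t =>
      rw [mk_add_mk, liftOn_mk, liftOn_mk, liftOn_mk]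
      exact mk_map_pow_pred_smul_add hp hξ m n s t

variable (hp : 0 < p) (hξ : ∀ (r : R) (m : M), ξ (r ^ p • m) = r • ξ m)

@[simp]
theorem skewMap_mk (m : M) (s : S) :
    skewMap hp hξ (mk m s) = mk (ξ ((s : R) ^ (p - 1) • m)) s := by
  simp only [skewMap, AddMonoidHom.coe_mk, ZeroHom.coe_mk, liftOn_mk]

theorem skewMap_pow_smul (c : Localization S) (u : LocalizedModule S M) :
    skewMap hp hξ (c ^ p • u) = c • skewMap hp hξ u := by
  induction u with
  | h m s =>
    induction c using Localization.induction_on with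
    | H a =>
      obtain ⟨r, t⟩ := a
      have : ((t ^ p * s : S) : R) ^ (p - 1) • r ^ p • m
          = ((t : R) ^ (p - 1) * r) ^ p • (s : R) ^ (p - 1) • m := by
        simp only [smul_smul, Submonoid.coe_mul, SubmonoidClass.coe_pow]
        congr 1
        ring
      dsimp only
      rw [Localization.mk_pow, mk_smul_mk, skewMap_mk, skewMap_mk, mk_smul_mk, this, hξ,
        mul_smul, ← pow_sub_one_mul hp.ne', mul_assoc,
        ← SubmonoidClass.coe_pow, ← Submonoid.smul_def, mk_cancel_common_left]

theorem iterate_skewMap_mk (k : ℕ) (m : M) (s : S) :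
    (skewMap hp hξ)^[k] (mk m s) = mk ((⇑ξ)^[k] ((s : R) ^ (p ^ k - 1) • m)) s := by
  induction k with
  | zero => simp
  | succ k ih =>
    rw [Function.iterate_succ_apply', ih, skewMap_mk, ← iterate_pow_pow_smul hξ, smul_smul,
      ← pow_mul, ← pow_add, pred_mul_pow_add_pow_pred hp, Function.iterate_succ_apply']

theorem mk_iterate_eq_iterate_skewMap_mk (k : ℕ) (m : M) (s : S) :
    mk ((⇑ξ)^[k] m) s = (skewMap hp hξ)^[k] (mk m (s ^ p ^ k)) := by
  have : ((s ^ p ^ k : S) : R) ^ (p ^ k - 1) = ((s : R) ^ (p ^ k - 1)) ^ p ^ k := by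
    rw [SubmonoidClass.coe_pow, ← pow_mul, ← pow_mul, mul_comm]
  rw [iterate_skewMap_mk, this, iterate_pow_pow_smul hξ,
    ← pow_sub_one_mul (pow_pos hp k).ne', ← SubmonoidClass.coe_pow, ← Submonoid.smul_def,
    mk_cancel_common_left]

theorem range_iterate_skewMap (k : ℕ) :
    Set.range (skewMap hp hξ)^[k] = {y | ∃ (m : M) (s : S), y = mk ((⇑ξ)^[k] m) s} := by
  ext y
  constructor
  · rintro ⟨x, rfl⟩
    induction x with
    | h m s => exact ⟨_, s, iterate_skewMap_mk hp hξ k m s⟩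
  · rintro ⟨m, s, rfl⟩
    exact ⟨_, (mk_iterate_eq_iterate_skewMap_mk hp hξ k m s).symm⟩

end LocalizedModule

theorem localized_right_skew_module_general (R M : Type*) [CommRing R] (p : ℕ) [Fact p.Prime]
    [AddCommGroup M] [Module R M] (ξ : M →+ M)
    (hξ : ∀ (r : R) (m : M), ξ (r ^ p • m) = r • ξ m) (S : Submonoid R) :
    ∃ Ξ : LocalizedModule S M →+ LocalizedModule S M,
      (∀ (m : M) (s : S),
        Ξ (LocalizedModule.mk m s) = LocalizedModule.mk (ξ ((s : R) ^ (p - 1) • m)) s) ∧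
      (∀ (c : Localization S) (u : LocalizedModule S M), Ξ (c ^ p • u) = c • Ξ u) ∧
      (∀ k : ℕ,
        {y : LocalizedModule S M | ∃ (m : M) (s : S), y = LocalizedModule.mk ((⇑ξ)^[k] m) s}
          = Set.range ((⇑Ξ)^[k])) := by
  have hp : 0 < p := (Fact.out : p.Prime).pos
  exact ⟨skewMap hp hξ, skewMap_mk hp hξ, skewMap_pow_smul hp hξ,
    fun k ↦ (range_iterate_skewMap hp hξ k).symm⟩

/-- Let `R` be a commutative ring of prime characteristic `p`, `M` a right
`R[x,f]`-module (encoded by the additive map `ξ : M → M`, `ξ m = m·x`, with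
`ξ (rᵖ • m) = r • ξ m`), and `S` a multiplicatively closed subset of `R`.  Then `S⁻¹M`
carries a natural right `(S⁻¹R)[x,f]`-module structure: an additive map `Ξ` with
`Ξ (m/s) = (ξ (s^{p-1} • m))/s` and `Ξ (cᵖ • u) = c • Ξ u` for all `c ∈ S⁻¹R`;
moreover, under this structure, `S⁻¹(M·xᵏ) = (S⁻¹M)·xᵏ` for all `k`. -/
theorem localized_right_skew_module (R M : Type*) [CommRing R] (p : ℕ) [Fact p.Prime]
    [CharP R p] [AddCommGroup M] [Module R M] (ξ : M →+ M)
    (hξ : ∀ (r : R) (m : M), ξ (r ^ p • m) = r • ξ m) (S : Submonoid R) :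
    ∃ Ξ : LocalizedModule S M →+ LocalizedModule S M,
      (∀ (m : M) (s : S),
        Ξ (LocalizedModule.mk m s) = LocalizedModule.mk (ξ ((s : R) ^ (p - 1) • m)) s) ∧
      (∀ (c : Localization S) (u : LocalizedModule S M), Ξ (c ^ p • u) = c • Ξ u) ∧
      (∀ k : ℕ,
        {y : LocalizedModule S M | ∃ (m : M) (s : S), y = LocalizedModule.mk ((⇑ξ)^[k] m) s}
          = Set.range ((⇑Ξ)^[k])) :=
  localized_right_skew_module_general R M p ξ hξ S
end

section
/- Let R be a commutative Noetherian ring of prime characteristic p and let M be a right module over the Frobenius skew polynomial ring R[x,f] that is Noetherian (finitely generated) as an R-module. Then there exists k ∈ ℕ such that M·x^k = M·x^{k+1}. -/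
/-!
Noetherian induction on `Module.annihilator R M`. Let `η` be a minimal prime of the annihilator.
Since `M_η` has finite length, the localised chain `(M·xᵉ)_η` stabilises, so some `h ∉ η`
satisfies `h·(M·xᵉ) ⊆ M·xᵉ⁺¹`. Replace `M` by `N = M·xᵉ`, so that `h·N ⊆ N·x`. As
`(hᵖ·u)·x = h·(u·x)` and `p ≥ 2`, this gives `h²·N ⊆ N·xʲ` for every `j`. Hence `h² ∉ η` kills
`Q = N / ⋂ⱼ N·xʲ`, whose annihilator thus strictly contains that of `M`. By induction the chain
`Q·xʲ` stabilises; since the kernel of `N → Q` lies in every `N·xʲ`, so does the chain `N·xʲ`,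
and with it `M·xʲ`.
-/

section DualHartshorneSpeiserLyubeznik

open Function Submodule

variable {R M : Type*} [CommRing R] [AddCommGroup M] [Module R M]

theorem Submodule.colon_not_le_of_fg {η : Ideal R} (hη : η.IsPrime) {N N' : Submodule R M}
    (hN : N.FG) (h : ∀ x ∈ N, ∃ s ∉ η, s • x ∈ N') : ¬ N'.colon N ≤ η := by
  classical
  obtain ⟨gens, rfl⟩ := hN
  rw [colon_span, ← Set.biUnion_of_singleton (gens : Set M)]
  simp only [Finset.mem_coe, colon_iUnion]
  rw [← Finset.inf_eq_iInf, hη.inf_le']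
  rintro ⟨x, hx, hle⟩
  obtain ⟨s, hs, hsx⟩ := h x (subset_span hx)
  exact hs (hle (mem_colon_singleton.mpr hsx))

theorem Submodule.exists_smul_mem_of_mem_localized {S : Submonoid R} {N : Submodule R M} {x : M}
    (h : LocalizedModule.mkLinearMap S M x ∈ N.localized S) : ∃ s ∈ S, s • x ∈ N := by
  obtain ⟨y, hy, s, hys⟩ := h
  rw [← IsLocalizedModule.mk'_one S, IsLocalizedModule.mk'_eq_mk'_iff] at hys
  obtain ⟨u, hu⟩ := hys
  refine ⟨u * s, S.mul_mem u.2 s.2, ?_⟩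
  simp only [Submonoid.smul_def, one_smul] at hu
  rw [mul_smul, hu]
  exact N.smul_mem _ hy

section Noetherian

variable [IsNoetherianRing R] [Module.Finite R M]

theorem isArtinian_localizedModule_of_mem_minimalPrimes (η : Ideal R) [η.IsPrime]
    (hη : η ∈ (Module.annihilator R M).minimalPrimes) :
    IsArtinian (Localization.AtPrime η) (LocalizedModule η.primeCompl M) := by
  set Rη := Localization.AtPrime η
  set Mη := LocalizedModule η.primeCompl M
  set J := (Module.annihilator R M).map (algebraMap R Rη)
  have hJ : IsLocalRing.maximalIdeal Rη ∈ J.minimalPrimes := by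
    rwa [IsLocalization.minimalPrimes_map η.primeCompl, Set.mem_preimage,
      Localization.AtPrime.under_maximalIdeal]
  have : IsArtinianRing (Rη ⧸ J) :=
    IsLocalRing.quotient_artinian_of_mem_minimalPrimes_of_isLocalRing J hJ
  have hJ_le : J ≤ Module.annihilator Rη Mη := by
    refine Ideal.map_le_iff_le_comap.mpr fun a ha => Module.mem_annihilator.mpr fun x => ?_
    induction x using LocalizedModule.induction_on with
    | h m s => rw [algebraMap_smul, LocalizedModule.smul'_mk, Module.mem_annihilator.mp ha,
        LocalizedModule.zero_mk]
  have htors : Module.IsTorsionBySet Rη Mη J :=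
    (Module.isTorsionBySet_iff_subset_annihilator Rη Mη).mpr hJ_le
  let _ := htors.module
  have : IsScalarTower Rη (Rη ⧸ J) Mη := htors.isScalarTower
  have : Module.Finite (Rη ⧸ J) Mη := Module.Finite.of_restrictScalars_finite Rη _ _
  exact isArtinian_of_surjective_algebraMap (R := Rη ⧸ J) Ideal.Quotient.mk_surjective

theorem Submodule.exists_colon_succ_not_le_of_antitone {η : Ideal R} [η.IsPrime]
    (hη : η ∈ (Module.annihilator R M).minimalPrimes) {C : ℕ → Submodule R M} (hC : Antitone C) :
    ∃ e, ¬ (C (e + 1)).colon (C e) ≤ η := by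
  have := isArtinian_localizedModule_of_mem_minimalPrimes η hη
  let localizedChain : ℕ →o (Submodule (Localization.AtPrime η) _)ᵒᵈ :=
    ⟨fun e => OrderDual.toDual ((C e).localized η.primeCompl),
      fun _ _ hij => (localized'gi _ _ _).gc.monotone_l (hC hij)⟩
  obtain ⟨e, he⟩ := IsArtinian.monotone_stabilizes localizedChain
  refine ⟨e, colon_not_le_of_fg ‹_› (IsNoetherian.noetherian _) fun x hx => ?_⟩
  have hstab : (C e).localized η.primeCompl = (C (e + 1)).localized η.primeCompl :=
    he (e + 1) e.le_succ
  have hx' : LocalizedModule.mkLinearMap η.primeCompl M x ∈ (C (e + 1)).localized η.primeCompl :=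
    hstab ▸ ⟨x, hx, 1, IsLocalizedModule.mk'_one _ _ x⟩
  obtain ⟨s, hs, hsx⟩ := exists_smul_mem_of_mem_localized hx'
  exact ⟨s, hs, hsx⟩

end Noetherian

theorem Function.Semiconj.image_range_iterate {α β : Type*} {φ : α → β} {f : α → α} {g : β → β}
    (h : Semiconj φ f g) (j : ℕ) : φ '' Set.range f^[j] = g^[j] '' Set.range φ := by
  rw [← Set.range_comp, ← Set.range_comp, (h.iterate_right j).comp_eq]

theorem Function.range_iterate_succ_subset {α : Type*} (f : α → α) (k : ℕ) :
    Set.range f^[k + 1] ⊆ Set.range f^[k] := by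
  rw [iterate_succ]
  exact Set.range_comp_subset_range _ _

theorem AddMonoidHom.range_iterate_eq_of_surjective {A B : Type*} [AddCommGroup A]
    [AddCommGroup B] {f : A →+ A} {g : B →+ B} {π : A →+ B} (hπ : Surjective π)
    (hcomm : Semiconj π f g) {k : ℕ} (hker : ∀ a, π a = 0 → a ∈ Set.range f^[k + 1])
    (hg : Set.range g^[k] = Set.range g^[k + 1]) : Set.range f^[k] = Set.range f^[k + 1] := by
  refine (range_iterate_succ_subset f k).antisymm' ?_
  rintro _ ⟨a, rfl⟩
  obtain ⟨b, hb⟩ : π (f^[k] a) ∈ Set.range g^[k + 1] := by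
    rw [← hg, (hcomm.iterate_right k).eq]
    exact ⟨_, rfl⟩
  obtain ⟨b, rfl⟩ := hπ b
  obtain ⟨c, hc⟩ := hker (f^[k] a - f^[k + 1] b) <| by
    rw [map_sub, (hcomm.iterate_right (k + 1)).eq, hb, sub_self]
  exact ⟨b + c, by rw [iterate_map_add, hc, add_sub_cancel]⟩

namespace AddMonoidHom

def restrictSubmodule (ξ : M →+ M) (N : Submodule R M) (hN : ∀ x ∈ N, ξ x ∈ N) : N →+ N :=
  (ξ.comp N.subtype.toAddMonoidHom).codRestrict N fun x => hN x x.2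

def mapQ (ξ : M →+ M) (U : Submodule R M) (hU : ∀ x ∈ U, ξ x ∈ U) : M ⧸ U →+ M ⧸ U :=
  QuotientAddGroup.map U.toAddSubgroup U.toAddSubgroup ξ hU

theorem range_iterate_eq_of_mapQ {ξ : M →+ M} {U : Submodule R M} (hU : ∀ x ∈ U, ξ x ∈ U)
    {k : ℕ} (hUk : (U : Set M) ⊆ Set.range ξ^[k + 1])
    (h : Set.range (ξ.mapQ U hU)^[k] = Set.range (ξ.mapQ U hU)^[k + 1]) :
    Set.range ξ^[k] = Set.range ξ^[k + 1] :=
  range_iterate_eq_of_surjective (π := U.mkQ.toAddMonoidHom) U.mkQ_surjective (fun _ => rfl)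
    (fun _ ha => hUk ((Submodule.Quotient.mk_eq_zero U).mp ha)) h

theorem range_iterate_add_eq_of_restrictSubmodule {ξ : M →+ M} {N : Submodule R M}
    (hN : ∀ x ∈ N, ξ x ∈ N) {e : ℕ} (hNe : (N : Set M) = Set.range ξ^[e]) {k : ℕ}
    (h : Set.range (ξ.restrictSubmodule N hN)^[k] = Set.range (ξ.restrictSubmodule N hN)^[k + 1]) :
    Set.range ξ^[k + e] = Set.range ξ^[k + e + 1] := by
  have hcomm : Semiconj ((↑) : N → M) (ξ.restrictSubmodule N hN) ξ := fun _ => rfl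
  have hrange (j : ℕ) :
      Set.range ξ^[j + e] = (↑) '' Set.range (ξ.restrictSubmodule N hN)^[j] := by
    rw [hcomm.image_range_iterate, Subtype.range_coe, hNe, ← Set.range_comp, iterate_add]
  rw [add_right_comm, hrange, hrange, h]

end AddMonoidHom

/-- `ξ` is `m ↦ m·x` for a right `R[x,f]`-module structure on `M`: the relation `x·r = rᵖ·x`
reads `ξ (rᵖ • m) = r • ξ m`. -/
def IsCartierMap (R : Type*) {M : Type*} [CommRing R] [AddCommGroup M] [Module R M] (p : ℕ)
    (ξ : M →+ M) : Prop :=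
  ∀ (r : R) (m : M), ξ (r ^ p • m) = r • ξ m

namespace IsCartierMap

variable {p : ℕ} {ξ : M →+ M}

theorem iterate_pow_smul (hξ : IsCartierMap R p ξ) (e : ℕ) (r : R) (m : M) :
    ξ^[e] (r ^ p ^ e • m) = r • ξ^[e] m := by
  induction e generalizing m with
  | zero => simp
  | succ e ih => rw [iterate_succ_apply, iterate_succ_apply, pow_succ, pow_mul, hξ, ih]

def iterateRange (hξ : IsCartierMap R p ξ) (e : ℕ) : Submodule R M where
  carrier := Set.range ξ^[e]
  zero_mem' := ⟨0, iterate_map_zero ξ e⟩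
  add_mem' := by
    rintro _ _ ⟨x, rfl⟩ ⟨y, rfl⟩
    exact ⟨x + y, iterate_map_add ξ e x y⟩
  smul_mem' := by
    rintro r _ ⟨x, rfl⟩
    exact ⟨r ^ p ^ e • x, hξ.iterate_pow_smul e r x⟩

theorem iterateRange_antitone (hξ : IsCartierMap R p ξ) : Antitone hξ.iterateRange :=
  antitone_nat_of_succ_le fun e => range_iterate_succ_subset ξ e

theorem map_mem_iterateRange (hξ : IsCartierMap R p ξ) (e : ℕ) {x : M}
    (hx : x ∈ hξ.iterateRange e) : ξ x ∈ hξ.iterateRange e := by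
  obtain ⟨y, rfl⟩ := hx
  exact ⟨ξ y, (iterate_succ_apply ..).symm.trans (iterate_succ_apply' ..)⟩

theorem map_mem_iInf_iterateRange (hξ : IsCartierMap R p ξ) {x : M}
    (hx : x ∈ ⨅ e, hξ.iterateRange e) : ξ x ∈ ⨅ e, hξ.iterateRange e :=
  (mem_iInf _).mpr fun e => hξ.map_mem_iterateRange e ((mem_iInf _).mp hx e)

theorem restrictSubmodule (hξ : IsCartierMap R p ξ) (N : Submodule R M) (hN : ∀ x ∈ N, ξ x ∈ N) :
    IsCartierMap R p (ξ.restrictSubmodule N hN) :=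
  fun r x => Subtype.ext (hξ r x)

theorem mapQ (hξ : IsCartierMap R p ξ) (U : Submodule R M) (hU : ∀ x ∈ U, ξ x ∈ U) :
    IsCartierMap R p (ξ.mapQ U hU) := by
  intro r x
  induction x using Submodule.Quotient.induction_on with
  | H m => exact congrArg (Submodule.Quotient.mk (p := U)) (hξ r m)

theorem sq_smul_mem_iterateRange (hp : 2 ≤ p) (hξ : IsCartierMap R p ξ) {h : R}
    (hh : ∀ m : M, h • m ∈ Set.range ξ) (e : ℕ) (m : M) : h ^ 2 • m ∈ hξ.iterateRange e := by
  induction e generalizing m with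
  | zero => exact ⟨_, rfl⟩
  | succ e ih =>
    obtain ⟨u, hu⟩ := hh m
    obtain ⟨w, hw⟩ : h ^ p • u ∈ hξ.iterateRange e := by
      have hpow : h ^ p = h ^ (p - 2) * h ^ 2 := by rw [← pow_add, Nat.sub_add_cancel hp]
      rw [hpow, mul_smul]
      exact (hξ.iterateRange e).smul_mem _ (ih u)
    refine ⟨w, ?_⟩
    rw [iterate_succ_apply', hw, hξ, hu, ← mul_smul, sq]

theorem sq_mem_annihilator_quotient_iInf_iterateRange (hp : 2 ≤ p) (hξ : IsCartierMap R p ξ)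
    {h : R} (hh : ∀ m : M, h • m ∈ Set.range ξ) :
    h ^ 2 ∈ Module.annihilator R (M ⧸ ⨅ e, hξ.iterateRange e) := by
  refine Module.mem_annihilator.mpr fun q => ?_
  induction q using Submodule.Quotient.induction_on with
  | H m =>
    rw [← Submodule.Quotient.mk_smul, Submodule.Quotient.mk_eq_zero]
    exact (mem_iInf _).mpr fun e => hξ.sq_smul_mem_iterateRange hp hh e m

theorem smul_mem_range_restrictSubmodule (hξ : IsCartierMap R p ξ) {e : ℕ} {h : R}
    (hh : h ∈ (hξ.iterateRange (e + 1)).colon (hξ.iterateRange e)) (x : hξ.iterateRange e) :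
    h • x ∈ Set.range (ξ.restrictSubmodule _ fun _ => hξ.map_mem_iterateRange e) := by
  obtain ⟨y, hy⟩ := mem_colon.mp hh x x.2
  exact ⟨⟨ξ^[e] y, y, rfl⟩, Subtype.ext ((iterate_succ_apply' ξ e y).symm.trans hy)⟩

theorem exists_range_iterate_eq [IsNoetherianRing R] [Module.Finite R M] (hp : 2 ≤ p)
    (hξ : IsCartierMap R p ξ) : ∃ k, Set.range ξ^[k] = Set.range ξ^[k + 1] := by
  induction hI : Module.annihilator R M using WellFoundedGT.induction generalizing M with
  | _ I IH =>
  rcases eq_or_ne (Module.annihilator R M) ⊤ with htop | hne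
  · have := Module.annihilator_eq_top_iff.mp htop
    exact ⟨0, Set.ext fun x => iff_of_true ⟨x, rfl⟩ ⟨x, Subsingleton.elim _ _⟩⟩
  obtain ⟨η, hη⟩ := Ideal.nonempty_minimalPrimes hne
  have hηprime := hη.isPrime
  obtain ⟨e, he⟩ := exists_colon_succ_not_le_of_antitone hη hξ.iterateRange_antitone
  obtain ⟨h, hh, hhη⟩ := SetLike.not_le_iff_exists.mp he
  set N := hξ.iterateRange e
  have hξN := hξ.restrictSubmodule N fun _ => hξ.map_mem_iterateRange e
  set U := ⨅ j, hξN.iterateRange j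
  have hlt : Module.annihilator R M < Module.annihilator R (N ⧸ U) := by
    refine lt_of_le_of_ne ((N.subtype.annihilator_le_of_injective Subtype.val_injective).trans
      (U.mkQ.annihilator_le_of_surjective U.mkQ_surjective)) fun heq => hhη ?_
    have hh2 := hξN.sq_mem_annihilator_quotient_iInf_iterateRange hp
      (hξ.smul_mem_range_restrictSubmodule hh)
    rw [← heq] at hh2
    exact hηprime.mem_of_pow_mem 2 (hη.1.2 hh2)
  obtain ⟨k, hk⟩ := IH _ (hI ▸ hlt) (hξN.mapQ U fun _ => hξN.map_mem_iInf_iterateRange) rfl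
  exact ⟨k + e, AddMonoidHom.range_iterate_add_eq_of_restrictSubmodule _ rfl
    (AddMonoidHom.range_iterate_eq_of_mapQ _ (fun _ hx => (mem_iInf _).mp hx (k + 1)) hk)⟩

end IsCartierMap

end DualHartshorneSpeiserLyubeznik

theorem dual_HSL_general (R M : Type*) [CommRing R] [IsNoetherianRing R] (p : ℕ) [Fact p.Prime]
    [AddCommGroup M] [Module R M] [Module.Finite R M] (ξ : M →+ M)
    (hξ : ∀ (r : R) (m : M), ξ (r ^ p • m) = r • ξ m) :
    ∃ k : ℕ, Set.range ((⇑ξ)^[k]) = Set.range ((⇑ξ)^[k + 1]) :=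
  IsCartierMap.exists_range_iterate_eq (Fact.out : p.Prime).two_le hξ

/-- dual Hartshorne–Speiser–Lyubeznik theorem: Let `R` be a commutative
Noetherian ring of prime characteristic `p` and `M` a right `R[x,f]`-module (encoded by
the additive map `ξ : M → M`, `ξ m = m·x`, satisfying `ξ (rᵖ • m) = r • ξ m`) that is
finitely generated as an `R`-module.  Since `M·xᵏ = {m·xᵏ : m ∈ M} = range ξ^[k]`, the
conclusion `M·xᵏ = M·xᵏ⁺¹` reads: there is `k ∈ ℕ` with `range ξ^[k] = range ξ^[k+1]`. -/
theorem dual_HSL (R M : Type*) [CommRing R] [IsNoetherianRing R] (p : ℕ) [Fact p.Prime]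
    [CharP R p] [AddCommGroup M] [Module R M] [Module.Finite R M] (ξ : M →+ M)
    (hξ : ∀ (r : R) (m : M), ξ (r ^ p • m) = r • ξ m) :
    ∃ k : ℕ, Set.range ((⇑ξ)^[k]) = Set.range ((⇑ξ)^[k + 1]) :=
  dual_HSL_general R M p ξ hξ
end
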